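/- Fix N ≥ 2. Then the instantiation τ_N solves the paper's linear equation system: (A) τ_N(1) = 1 + (if N is odd and (1+N)/2 ∈ P_{2,N} then (1/2)·τ_N((1+N)/2) else 0); and (B) for every i with 1 < i < N and i ∈ P_{2,N}: τ_N(i) = (if i is even and i/2 ∈ P_{2,N} then (1/2)·τ_N(i/2) else 0) + (if i + N is even and (i+N)/2 ∈ P_{2,N} then (1/2)·τ_N((i+N)/2) else 0). -/

import Mathlib

open scoped Classical

/-- `F N i`: the least `k` with `2^k ≡ i (mod N)`, or `∞` if no such `k` exists. -/
noncomputable def F (N i : ℕ) : ℕ∞ :=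
  sInf {k : ℕ∞ | ∃ m : ℕ, k = (m : ℕ∞) ∧ 2 ^ m ≡ i [MOD N]}

/-- `L N i`: the least `l ≥ 1` with `i·2^l ≡ i (mod N)`, or `∞` if no such `l` exists. -/
noncomputable def L (N i : ℕ) : ℕ∞ :=
  sInf {k : ℕ∞ | ∃ l : ℕ, k = (l : ℕ∞) ∧ 1 ≤ l ∧ i * 2 ^ l ≡ i [MOD N]}

/-- `P2 N`: the set of residues of powers of two modulo `N`. -/
def P2 (N : ℕ) : Set ℕ := {i : ℕ | ∃ k : ℕ, 2 ^ k ≡ i [MOD N]}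

/-- The instantiation `τ_N(i) = (1/2)^{F_N(i)} · (1 − (1/2)^{L_N(i)})⁻¹` (with the second
factor equal to `1` when `L_N(i) = ∞`). -/
noncomputable def tau (N i : ℕ) : ℝ :=
  if L N i = ⊤ then (1 / 2 : ℝ) ^ (F N i).toNat
  else (1 / 2 : ℝ) ^ (F N i).toNat * (1 - (1 / 2 : ℝ) ^ (L N i).toNat)⁻¹

/-!
For `i ∈ P2 N`, `τ_N(i)` is the sum of `2⁻ᵏ` over the exponents `k` with
`2 ^ k ≡ i (mod N)`. These exponents form the progression `F_N(i) + L_N(i) * ℕ` (only `F_N(i)`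
when `L_N(i) = ∞`), because `L_N(i)` is the minimal period of `i` under doubling in `ZMod N`;
summing the geometric series gives the closed form defining `τ_N(i)`. For `i < N`,
`2 ^ (k + 1) ≡ i` holds exactly when `2 ^ k` is congruent to one of the halves `i / 2`,
`(i + N) / 2` that exist, and never to both. Splitting off the term `k = 0` of the series
therefore yields both equations.
-/

open Function

lemma toNat_sInf_setOf_natCast (P : ℕ → Prop) :
    (sInf {k : ℕ∞ | ∃ m : ℕ, k = m ∧ P m}).toNat = sInf {m | P m} := by
  by_cases h : ∃ m, P m
  · suffices sInf {k : ℕ∞ | ∃ m : ℕ, k = m ∧ P m} = (sInf {m | P m} : ℕ) by simp [this]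
    refine le_antisymm (sInf_le ⟨_, rfl, Nat.sInf_mem h⟩) (le_sInf ?_)
    rintro _ ⟨m, rfl, hm⟩
    exact_mod_cast Nat.sInf_le hm
  · push Not at h
    simp [h]

lemma sInf_setOf_natCast_eq_top_iff (P : ℕ → Prop) :
    sInf {k : ℕ∞ | ∃ m : ℕ, k = m ∧ P m} = ⊤ ↔ ∀ m, ¬ P m := by
  rw [sInf_eq_top]
  exact ⟨fun h m hm => ENat.natCast_ne_top m (h _ ⟨m, rfl, hm⟩),
    fun h _ ⟨m, _, hm⟩ => (h m hm).elim⟩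

lemma hasSum_indicator_pow_arithProgression {K : Type*} [NormedDivisionRing K] {r : K}
    (hr : ‖r‖ < 1) (a p : ℕ) :
    HasSum ({k | a ≤ k ∧ p ∣ k - a}.indicator (r ^ ·))
      (if p = 0 then r ^ a else r ^ a * (1 - r ^ p)⁻¹) := by
  rcases p.eq_zero_or_pos with rfl | hp
  · have hsingle : {k | a ≤ k ∧ 0 ∣ k - a} = ({a} : Set ℕ) := by
      ext k; simp [zero_dvd_iff]; omega
    rw [if_pos rfl, hsingle, ← Set.indicator_of_mem (Set.mem_singleton a) (r ^ · : ℕ → K)]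
    exact hasSum_single a fun k hk => Set.indicator_of_notMem (Set.mem_singleton_iff.not.mpr hk) _
  rw [if_neg hp.ne']
  have hinj : Injective (fun m => a + p * m) := fun m n h => by
    simpa [hp.ne'] using h
  refine (hinj.hasSum_iff fun k hk => Set.indicator_of_notMem ?_ _).mp ?_
  · rintro ⟨hak, m, hm⟩
    exact hk ⟨m, by simp only; omega⟩
  · have hrp : ‖r ^ p‖ < 1 := by rw [norm_pow]; exact pow_lt_one₀ (norm_nonneg _) hr hp.ne'
    have hterm : ∀ m,
        {k | a ≤ k ∧ p ∣ k - a}.indicator (r ^ ·) (a + p * m) = r ^ a * (r ^ p) ^ m := by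
      intro m
      rw [Set.indicator_of_mem (show a + p * m ∈ {k | a ≤ k ∧ p ∣ k - a} from
        ⟨by omega, m, by omega⟩), pow_add, pow_mul]
    simpa only [comp_def, hterm] using (hasSum_geometric_of_norm_lt_one hrp).mul_left (r ^ a)

lemma two_mul_modEq_iff {N i : ℕ} (hi : i < N) {x : ℕ} :
    2 * x ≡ i [MOD N] ↔
      (Even i ∧ x ≡ i / 2 [MOD N]) ∨ (Even (i + N) ∧ x ≡ (i + N) / 2 [MOD N]) := by
  have hy : x % N < N := Nat.mod_lt _ (by omega)
  simp only [Nat.ModEq, ← Nat.mul_mod_mod 2 x, Nat.even_iff]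
  rw [Nat.mod_eq_of_lt hi, Nat.mod_eq_of_lt (by omega : i / 2 < N),
    Nat.mod_eq_of_lt (by omega : (i + N) / 2 < N)]
  rcases lt_or_ge (2 * (x % N)) N with hlt | hge
  · rw [Nat.mod_eq_of_lt hlt]
    omega
  · rw [Nat.mod_eq_sub_mod hge, Nat.mod_eq_of_lt (by omega)]
    omega

lemma half_not_modEq_half_add {N i : ℕ} (hi : i < N) (heven : Even i)
    (heven' : Even (i + N)) :
    ¬ i / 2 ≡ (i + N) / 2 [MOD N] := by
  rw [Nat.ModEq, Nat.mod_eq_of_lt (by omega), Nat.mod_eq_of_lt (by omega)]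
  rw [Nat.even_iff] at heven heven'
  omega

def hitTimes (N i : ℕ) : Set ℕ := {k | 2 ^ k ≡ i [MOD N]}

/-- `L N i` as a natural number: it is `0` exactly when `L N i = ⊤`. -/
noncomputable def doublingPeriod (N i : ℕ) : ℕ := minimalPeriod (· * 2 : ZMod N → ZMod N) i

noncomputable def hitWeight (N i : ℕ) : ℕ → ℝ :=
  (hitTimes N i).indicator ((1 / 2 : ℝ) ^ ·)

section

variable {N i : ℕ}

lemma mem_hitTimes_iff_zmod {k : ℕ} : k ∈ hitTimes N i ↔ (2 : ZMod N) ^ k = i := by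
  rw [← Nat.cast_ofNat, ← Nat.cast_pow, ZMod.natCast_eq_natCast_iff]
  rfl

lemma isPeriodicPt_mul_two_iff {l : ℕ} :
    IsPeriodicPt (· * 2 : ZMod N → ZMod N) l i ↔ (i : ZMod N) * 2 ^ l = i := by
  rw [IsPeriodicPt, IsFixedPt, mul_right_iterate_apply]

lemma isPeriodicPt_mul_two_iff_modEq {l : ℕ} :
    IsPeriodicPt (· * 2 : ZMod N → ZMod N) l i ↔ i * 2 ^ l ≡ i [MOD N] := by
  rw [isPeriodicPt_mul_two_iff, ← ZMod.natCast_eq_natCast_iff]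
  push_cast
  rfl

lemma F_toNat : (F N i).toNat = sInf (hitTimes N i) :=
  toNat_sInf_setOf_natCast _

lemma L_toNat : (L N i).toNat = doublingPeriod N i := by
  rw [L, toNat_sInf_setOf_natCast, doublingPeriod, minimalPeriod_eq_sInf_n_pos_IsPeriodicPt]
  simp only [isPeriodicPt_mul_two_iff_modEq, Nat.one_le_iff_ne_zero, pos_iff_ne_zero]

lemma L_eq_top_iff : L N i = ⊤ ↔ doublingPeriod N i = 0 := by
  rw [L, sInf_setOf_natCast_eq_top_iff, doublingPeriod,
    minimalPeriod_eq_zero_iff_notMem_periodicPts, mem_periodicPts]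
  simp only [isPeriodicPt_mul_two_iff_modEq, Nat.one_le_iff_ne_zero, pos_iff_ne_zero]
  push Not
  rfl

lemma tau_eq_ite :
    tau N i = if doublingPeriod N i = 0 then (1 / 2 : ℝ) ^ sInf (hitTimes N i)
    else (1 / 2 : ℝ) ^ sInf (hitTimes N i) * (1 - (1 / 2 : ℝ) ^ doublingPeriod N i)⁻¹ := by
  simp only [tau, L_eq_top_iff, F_toNat, L_toNat]

lemma mem_hitTimes_iff_dvd (h : (hitTimes N i).Nonempty) {k : ℕ} :
    k ∈ hitTimes N i ↔
      sInf (hitTimes N i) ≤ k ∧ doublingPeriod N i ∣ k - sInf (hitTimes N i) := by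
  set f := sInf (hitTimes N i)
  have hf : (2 : ZMod N) ^ f = i := mem_hitTimes_iff_zmod.mp (Nat.sInf_mem h)
  rw [doublingPeriod, ← isPeriodicPt_iff_minimalPeriod_dvd, isPeriodicPt_mul_two_iff,
    mem_hitTimes_iff_zmod]
  constructor
  · intro hk
    have hfk : f ≤ k := Nat.sInf_le (mem_hitTimes_iff_zmod.mpr hk)
    refine ⟨hfk, ?_⟩
    rw [← hf, ← pow_add, Nat.add_sub_cancel' hfk, hk, hf]
  · rintro ⟨hfk, hper⟩
    rw [← Nat.add_sub_cancel' hfk, pow_add, hf, hper]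

lemma hasSum_hitWeight (h : i ∈ P2 N) : HasSum (hitWeight N i) (tau N i) := by
  have hset : hitTimes N i = {k | sInf (hitTimes N i) ≤ k ∧
      doublingPeriod N i ∣ k - sInf (hitTimes N i)} := Set.ext fun _ => mem_hitTimes_iff_dvd h
  rw [tau_eq_ite, hitWeight]
  simpa only [← hset] using hasSum_indicator_pow_arithProgression
    (by norm_num : ‖(1 / 2 : ℝ)‖ < 1) (sInf (hitTimes N i)) (doublingPeriod N i)

lemma hitWeight_of_notMem (h : i ∉ P2 N) : hitWeight N i = 0 := by
  have hempty : hitTimes N i = ∅ := Set.eq_empty_of_forall_notMem fun k hk => h ⟨k, hk⟩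
  rw [hitWeight, hempty, Set.indicator_empty]
  rfl

lemma hasSum_ite_hitWeight (E : Prop) [Decidable E] (j : ℕ) :
    HasSum (fun k => if E then (1 / 2 : ℝ) * hitWeight N j k else 0)
      (if E ∧ j ∈ P2 N then (1 / 2 : ℝ) * tau N j else 0) := by
  by_cases hE : E
  · by_cases hj : j ∈ P2 N
    · simp only [hE, hj, and_self, if_true]
      exact (hasSum_hitWeight hj).mul_left _
    · simp [hE, hj, hitWeight_of_notMem hj]
  · simp [hE]

lemma succ_mem_hitTimes_iff (hi : i < N) {k : ℕ} :
    k + 1 ∈ hitTimes N i ↔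
      (Even i ∧ k ∈ hitTimes N (i / 2)) ∨ (Even (i + N) ∧ k ∈ hitTimes N ((i + N) / 2)) :=
  (pow_succ' 2 k ▸ two_mul_modEq_iff hi :)

lemma hitWeight_succ (hi : i < N) (k : ℕ) :
    hitWeight N i (k + 1) =
      (if Even i then (1 / 2 : ℝ) * hitWeight N (i / 2) k else 0) +
      (if Even (i + N) then (1 / 2 : ℝ) * hitWeight N ((i + N) / 2) k else 0) := by
  have hdisj : ¬ (k ∈ hitTimes N (i / 2) ∧ k ∈ hitTimes N ((i + N) / 2)) ∨
      ¬ (Even i ∧ Even (i + N)) := by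
    by_contra! ⟨⟨h₁, h₂⟩, heven, heven'⟩
    exact half_not_modEq_half_add hi heven heven' (h₁.symm.trans h₂)
  simp only [hitWeight, Set.indicator_apply, succ_mem_hitTimes_iff hi]
  by_cases hE₁ : Even i <;> by_cases hE₂ : Even (i + N) <;>
    by_cases h₁ : k ∈ hitTimes N (i / 2) <;> by_cases h₂ : k ∈ hitTimes N ((i + N) / 2) <;>
    simp [hE₁, hE₂, h₁, h₂, pow_succ, mul_comm] at hdisj ⊢

lemma hitWeight_zero : hitWeight N i 0 = if 1 ≡ i [MOD N] then 1 else 0 := by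
  by_cases h : 1 ≡ i [MOD N]
  · rw [if_pos h, hitWeight, Set.indicator_of_mem (by exact h), pow_zero]
  · rw [if_neg h, hitWeight, Set.indicator_of_notMem (by exact h)]

lemma tau_eq_halves (hi : i < N) (hP : i ∈ P2 N) :
    tau N i = (if 1 ≡ i [MOD N] then 1 else 0) +
      ((if Even i ∧ i / 2 ∈ P2 N then (1 / 2 : ℝ) * tau N (i / 2) else 0) +
        (if Even (i + N) ∧ (i + N) / 2 ∈ P2 N then (1 / 2 : ℝ) * tau N ((i + N) / 2) else 0)) := by
  have htail := (hasSum_ite_hitWeight (N := N) (Even i) (i / 2)).add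
    (hasSum_ite_hitWeight (N := N) (Even (i + N)) ((i + N) / 2))
  simp only [← hitWeight_succ hi] at htail
  rw [← hitWeight_zero]
  exact (hasSum_hitWeight hP).unique htail.zero_add

end

/-- `τ_N` solves the linear equation system of the Fast Dice Roller invariant. -/
theorem tau_solves_equations (N : ℕ) (hN : 2 ≤ N) :
    (tau N 1 =
      1 + (if Odd N ∧ (1 + N) / 2 ∈ P2 N then (1 / 2 : ℝ) * tau N ((1 + N) / 2) else 0)) ∧
    (∀ i : ℕ, 1 < i → i < N → i ∈ P2 N →
      tau N i =
        (if Even i ∧ i / 2 ∈ P2 N then (1 / 2 : ℝ) * tau N (i / 2) else 0) +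
        (if Even (i + N) ∧ (i + N) / 2 ∈ P2 N then (1 / 2 : ℝ) * tau N ((i + N) / 2) else 0)) := by
  constructor
  · have hone : (1 : ℕ) ∈ P2 N := ⟨0, rfl⟩
    rw [tau_eq_halves (by omega) hone, if_pos (Nat.ModEq.refl 1)]
    simp [parity_simps]
  · intro i hi₁ hiN hP
    have hne : ¬ 1 ≡ i [MOD N] := by
      rw [Nat.ModEq, Nat.mod_eq_of_lt (by omega), Nat.mod_eq_of_lt hiN]
      omega
    rw [tau_eq_halves hiN hP, if_neg hne, zero_add]
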